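/- Let Φ be a ν-invariant extended solution with Grassmannian model W = ΦH_+ and φ = Φ_{-1} : M → G_*(ℂ^n). Let Y be a smooth subbundle of W containing λW. Then Y is closed under ν if and only if Z = P_0(Φ^{-1}Y) splits for φ, i.e. Z = (Z ∩ φ) ⊕ (Z ∩ φ^⊥); and in that case, writing Y = Y_+ ⊕ Y_− for the decomposition of Y into the (+1)- and (−1)-eigenbundles of ν, one has Z ∩ φ = P_0(Φ^{-1}Y_+) and Z ∩ φ^⊥ = P_0(Φ^{-1}Y_−). -/

import Mathlib

/-!
Common definitions for formalizing "New constructions of twistor lifts for harmonic maps"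
(Svensson–Wood).  A Riemann surface is modelled by an open connected subset `M` of `ℂ`
(a coordinate domain), the trivial bundle `ℂⁿ` by families over `ℂ` of objects attached
to `Evec n = EuclideanSpace ℂ (Fin n)`, subbundles by families of submodules, and maps
into `U(n)` by families of unitary continuous linear endomorphisms.
-/

noncomputable section

namespace Twistor

/-- The fibre `ℂⁿ` of the trivial bundle. -/
abbrev Evec (n : ℕ) : Type := EuclideanSpace ℂ (Fin n)

variable {n : ℕ}

/-- Orthogonal projection onto a subspace, as an endomorphism of `ℂⁿ`. -/
def projC (K : Submodule ℂ (Evec n)) : Evec n →L[ℂ] Evec n :=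
  K.subtypeL.comp (K.orthogonalProjectionOnto)

/-- The Wirtinger derivative `∂_z` of a map from `ℂ` into a complex normed space. -/
def wz {F : Type*} [NormedAddCommGroup F] [NormedSpace ℂ F] (f : ℂ → F) (z : ℂ) : F :=
  (2 : ℂ)⁻¹ • (fderiv ℝ f z 1 - Complex.I • fderiv ℝ f z Complex.I)

/-- The Wirtinger derivative `∂_z̄` of a map from `ℂ` into a complex normed space. -/
def wzbar {F : Type*} [NormedAddCommGroup F] [NormedSpace ℂ F] (f : ℂ → F) (z : ℂ) : F :=
  (2 : ℂ)⁻¹ • (fderiv ℝ f z 1 + Complex.I • fderiv ℝ f z Complex.I)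

/-- `A_z^φ = ½ φ⁻¹ ∂_z φ` (for unitary `φ z`, `φ⁻¹ = star φ`). -/
def Az (φ : ℂ → (Evec n →L[ℂ] Evec n)) (z : ℂ) : Evec n →L[ℂ] Evec n :=
  (2 : ℂ)⁻¹ • (star (φ z) * wz φ z)

/-- `A_z̄^φ = ½ φ⁻¹ ∂_z̄ φ`. -/
def Azbar (φ : ℂ → (Evec n →L[ℂ] Evec n)) (z : ℂ) : Evec n →L[ℂ] Evec n :=
  (2 : ℂ)⁻¹ • (star (φ z) * wzbar φ z)

/-- The Koszul–Malgrange operator `D_z̄^φ = ∂_z̄ + A_z̄^φ` on sections of `ℂⁿ`. -/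
def Dzbar (φ : ℂ → (Evec n →L[ℂ] Evec n)) (σ : ℂ → Evec n) (z : ℂ) : Evec n :=
  wzbar σ z + Azbar φ z (σ z)

/-- A smooth map `M → U(n)`. -/
def IsUnitaryMap (M : Set ℂ) (φ : ℂ → (Evec n →L[ℂ] Evec n)) : Prop :=
  ContDiffOn ℝ (⊤ : ℕ∞) φ M ∧ ∀ z ∈ M, φ z ∈ unitary (Evec n →L[ℂ] Evec n)

/-- A harmonic map `M → U(n)`: a smooth unitary-valued map such that `A_z^φ` is a
holomorphic endomorphism of `(ℂⁿ, D_z̄^φ)`. -/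
def IsHarmonicU (M : Set ℂ) (φ : ℂ → (Evec n →L[ℂ] Evec n)) : Prop :=
  IsUnitaryMap M φ ∧
    ∀ σ : ℂ → Evec n, ContDiff ℝ (⊤ : ℕ∞) σ →
      ∀ z ∈ M, Dzbar φ (fun w => Az φ w (σ w)) z = Az φ z (Dzbar φ σ z)

/-- `φ` is nilconformal: `(A_z^φ)^r = 0` for some `r`. -/
def IsNilconformal (M : Set ℂ) (φ : ℂ → (Evec n →L[ℂ] Evec n)) : Prop :=
  ∃ r : ℕ, ∀ z ∈ M, (Az φ z) ^ r = 0

/-- The Cartan embedding `V ↦ π_V - π_V^⊥`. -/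
def cartan (K : Submodule ℂ (Evec n)) : Evec n →L[ℂ] Evec n :=
  projC K - projC Kᗮ

/-- A map into a Grassmannian, i.e. a family of subspaces, composed with the Cartan
embedding. -/
def cartanMap (P : ℂ → Submodule ℂ (Evec n)) : ℂ → (Evec n →L[ℂ] Evec n) :=
  fun z => cartan (P z)

/-- A smooth subbundle of `ℂⁿ` over `M`: the family of orthogonal projections is smooth. -/
def IsSmoothSubbundle (M : Set ℂ) (P : ℂ → Submodule ℂ (Evec n)) : Prop :=
  ContDiffOn ℝ (⊤ : ℕ∞) (fun z => projC (P z)) M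

/-- A smooth map `M → G_*(ℂⁿ)`. -/
def IsGrassMap (M : Set ℂ) (P : ℂ → Submodule ℂ (Evec n)) : Prop :=
  IsSmoothSubbundle M P

/-- A harmonic map `M → G_*(ℂⁿ)` (harmonicity via the Cartan embedding). -/
def IsHarmonicGrass (M : Set ℂ) (P : ℂ → Submodule ℂ (Evec n)) : Prop :=
  IsSmoothSubbundle M P ∧ IsHarmonicU M (cartanMap P)

/-- A holomorphic subbundle of `(ℂⁿ, D_z̄^φ)`: smooth sections are closed under `D_z̄^φ`. -/
def IsHolomorphicSubbundle (M : Set ℂ) (φ : ℂ → (Evec n →L[ℂ] Evec n))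
    (P : ℂ → Submodule ℂ (Evec n)) : Prop :=
  ∀ σ : ℂ → Evec n, ContDiff ℝ (⊤ : ℕ∞) σ → (∀ z ∈ M, σ z ∈ P z) → ∀ z ∈ M, Dzbar φ σ z ∈ P z

/-- A uniton for (a harmonic map) `φ : M → U(n)`. -/
def IsUniton (M : Set ℂ) (φ : ℂ → (Evec n →L[ℂ] Evec n))
    (α : ℂ → Submodule ℂ (Evec n)) : Prop :=
  IsSmoothSubbundle M α ∧ IsHolomorphicSubbundle M φ α ∧
    ∀ z ∈ M, (α z).map (Az φ z : Evec n →ₗ[ℂ] Evec n) ≤ α z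

/-- A basic uniton: a holomorphic subbundle contained in `ker A_z^φ`. -/
def IsBasicUniton (M : Set ℂ) (φ : ℂ → (Evec n →L[ℂ] Evec n))
    (α : ℂ → Submodule ℂ (Evec n)) : Prop :=
  IsSmoothSubbundle M α ∧ IsHolomorphicSubbundle M φ α ∧
    ∀ z ∈ M, α z ≤ LinearMap.ker (Az φ z : Evec n →ₗ[ℂ] Evec n)

/-- An antibasic uniton: a holomorphic subbundle containing `Im A_z^φ`. -/
def IsAntibasicUniton (M : Set ℂ) (φ : ℂ → (Evec n →L[ℂ] Evec n))
    (α : ℂ → Submodule ℂ (Evec n)) : Prop :=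
  IsSmoothSubbundle M α ∧ IsHolomorphicSubbundle M φ α ∧
    ∀ z ∈ M, LinearMap.range (Az φ z : Evec n →ₗ[ℂ] Evec n) ≤ α z

/-- An `A_z^φ`-filtration of length `t`:
`ℂⁿ = Z_0 ⊃ Z_1 ⊃ ⋯ ⊃ Z_t ⊃ Z_{t+1} = 0`, each `Z_i` a smooth holomorphic subbundle,
and `A_z^φ` maps `Z_i` into `Z_{i+1}`. -/
def IsAzFiltration (M : Set ℂ) (φ : ℂ → (Evec n →L[ℂ] Evec n)) (t : ℕ)
    (Z : ℕ → ℂ → Submodule ℂ (Evec n)) : Prop :=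
  (∀ z ∈ M, Z 0 z = ⊤) ∧ (∀ z ∈ M, Z (t + 1) z = ⊥) ∧
  (∀ i ≤ t, ∀ z ∈ M, Z (i + 1) z ≤ Z i z) ∧
  (∀ i ≤ t + 1, IsSmoothSubbundle M (Z i)) ∧
  (∀ i ≤ t + 1, IsHolomorphicSubbundle M φ (Z i)) ∧
  (∀ i ≤ t, ∀ z ∈ M, (Z i z).map (Az φ z : Evec n →ₗ[ℂ] Evec n) ≤ Z (i + 1) z)

/-- A strict filtration: all inclusions `Z_{i+1} ⊂ Z_i` are proper. -/
def IsStrictFiltration (M : Set ℂ) (t : ℕ) (Z : ℕ → ℂ → Submodule ℂ (Evec n)) : Prop :=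
  ∀ i ≤ t, ∀ z ∈ M, Z (i + 1) z < Z i z

/-- The legs `ψ_i = Z_i ⊖ Z_{i+1}` of a filtration. -/
def leg (Z : ℕ → ℂ → Submodule ℂ (Evec n)) (i : ℕ) (z : ℂ) : Submodule ℂ (Evec n) :=
  Z i z ⊓ (Z (i + 1) z)ᗮ

/-- The filtration is alternating for `P`: `ψ_i ⊂ P` for `i` even, `ψ_i ⊂ P^⊥` for `i` odd. -/
def AlternatingFor (M : Set ℂ) (P : ℂ → Submodule ℂ (Evec n)) (t : ℕ)
    (Z : ℕ → ℂ → Submodule ℂ (Evec n)) : Prop :=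
  ∀ i ≤ t, ∀ z ∈ M, leg Z i z ≤ (if Even i then P z else (P z)ᗮ)

/-- A subbundle `Z` splits for `P` if `Z = (Z ∩ P) ⊕ (Z ∩ P^⊥)`. -/
def SplitsFor (M : Set ℂ) (P Z : ℂ → Submodule ℂ (Evec n)) : Prop :=
  ∀ z ∈ M, Z z = (Z z ⊓ P z) ⊔ (Z z ⊓ (P z)ᗮ)

/-- A moving flag with `t+1` legs (zero legs being allowed): mutually orthogonal smooth
subbundles whose sum is `ℂⁿ`. -/
def IsMovingFlag (M : Set ℂ) (t : ℕ) (ψ : ℕ → ℂ → Submodule ℂ (Evec n)) : Prop :=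
  (∀ i ≤ t, IsSmoothSubbundle M (ψ i)) ∧
  (∀ i ≤ t, ∀ j ≤ t, i ≠ j → ∀ z ∈ M, ψ i z ≤ (ψ j z)ᗮ) ∧
  (∀ z ∈ M, (⨆ i ∈ Finset.range (t + 1), ψ i z) = ⊤)

/-- Vanishing of the `∂'`-second fundamental form `A'_{A,B}`. -/
def SffVanishes (M : Set ℂ) (A B : ℂ → Submodule ℂ (Evec n)) : Prop :=
  ∀ σ : ℂ → Evec n, ContDiff ℝ (⊤ : ℕ∞) σ → (∀ z ∈ M, σ z ∈ A z) →
    ∀ z ∈ M, projC (B z) (wz σ z) = 0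

/-- The `J₂`-holomorphicity condition for a flag with `t+1` legs:
`A'_{ψ_i,ψ_j} = 0` when `i - j` is positive and odd, or `j - i` is positive and even. -/
def SatisfiesJ2 (M : Set ℂ) (t : ℕ) (ψ : ℕ → ℂ → Submodule ℂ (Evec n)) : Prop :=
  ∀ i ≤ t, ∀ j ≤ t, ((j < i ∧ Odd (i - j)) ∨ (i < j ∧ Even (j - i))) →
    SffVanishes M (ψ i) (ψ j)

/-- The twistor projection `π_e ∘ ψ = Σ_j ψ_{2j}` of a flag with `t+1` legs. -/
def evenSum (t : ℕ) (ψ : ℕ → ℂ → Submodule ℂ (Evec n)) (z : ℂ) : Submodule ℂ (Evec n) :=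
  ⨆ i ∈ (Finset.range (t + 1)).filter (fun i => Even i), ψ i z

/-- A `J₂`-holomorphic twistor lift of `P` into the flag manifold `F_{d_0,…,d_t}`:
a moving flag with all legs non-zero and of constant rank, satisfying the
`J₂`-holomorphicity condition, with twistor projection `P`. -/
def IsJ2LiftOf (M : Set ℂ) (t : ℕ) (ψ : ℕ → ℂ → Submodule ℂ (Evec n))
    (P : ℂ → Submodule ℂ (Evec n)) : Prop :=
  IsMovingFlag M t ψ ∧ SatisfiesJ2 M t ψ ∧
  (∀ i ≤ t, ∀ z ∈ M, ψ i z ≠ ⊥) ∧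
  (∀ i ≤ t, ∃ d : ℕ, ∀ z ∈ M, Module.finrank ℂ (ψ i z) = d) ∧
  (∀ z ∈ M, evenSum t ψ z = P z)

/-! ### Conjugation -/

/-- Componentwise complex conjugation on `ℂⁿ`, as a real-linear map. -/
def conjRlin : Evec n →ₗ[ℝ] Evec n where
  toFun v := WithLp.toLp 2 (fun i => starRingEnd ℂ (v i))
  map_add' v w := by ext i; simp [PiLp.add_apply]
  map_smul' r v := by ext i; simp [PiLp.smul_apply, Complex.real_smul]

/-- Componentwise complex conjugation on `ℂⁿ`. -/
def conjE (v : Evec n) : Evec n := conjRlin v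

lemma conjE_add (v w : Evec n) : conjE (v + w) = conjE v + conjE w := conjRlin.map_add v w

lemma conjE_zero : conjE (0 : Evec n) = 0 := conjRlin.map_zero

lemma conjE_smul (c : ℂ) (v : Evec n) : conjE (c • v) = (starRingEnd ℂ c) • conjE v := by
  ext i; simp [conjE, conjRlin, PiLp.smul_apply]

lemma conjE_continuous : Continuous (conjE (n := n)) :=
  (conjRlin (n := n)).continuous_of_finiteDimensional

/-- The complex conjugate of a subspace of `ℂⁿ`. -/
def conjSub (K : Submodule ℂ (Evec n)) : Submodule ℂ (Evec n) where
  carrier := conjE '' (K : Set (Evec n))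
  add_mem' := by
    rintro _ _ ⟨a, ha, rfl⟩ ⟨b, hb, rfl⟩
    exact ⟨a + b, K.add_mem ha hb, conjE_add a b⟩
  zero_mem' := ⟨0, K.zero_mem, conjE_zero⟩
  smul_mem' := by
    rintro c _ ⟨a, ha, rfl⟩
    refine ⟨(starRingEnd ℂ c) • a, K.smul_mem _ ha, ?_⟩
    rw [conjE_smul]; simp

/-- The complex conjugate `ḡ` of an endomorphism of `ℂⁿ`. -/
def conjOp (g : Evec n →L[ℂ] Evec n) : Evec n →L[ℂ] Evec n :=
  LinearMap.toContinuousLinearMap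
    { toFun := fun v => conjE (g (conjE v))
      map_add' := by
        intro v w
        show conjE (g (conjE (v + w))) = conjE (g (conjE v)) + conjE (g (conjE w))
        rw [conjE_add, map_add, conjE_add]
      map_smul' := by
        intro c v
        show conjE (g (conjE (c • v))) = c • conjE (g (conjE v))
        rw [conjE_smul, map_smul, conjE_smul]
        simp }

/-- A subbundle is isotropic if it is contained in the orthogonal complement of its
conjugate (i.e. the standard complex-bilinear inner product vanishes on it). -/
def IsIsotropic (M : Set ℂ) (α : ℂ → Submodule ℂ (Evec n)) : Prop :=
  ∀ z ∈ M, α z ≤ (conjSub (α z))ᗮ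

/-! ### The loop group and the Grassmannian model.

`S¹` is modelled additively as `AddCircle 1`, with `λ = fourier 1`.  The Hilbert space
`H = L²(S¹, ℂⁿ)` is modelled by its dense subspace of continuous functions
`Hsp n = C(S¹, ℂⁿ)` (with `H_+` the *closed* span of `{λ^i e : i ≥ 0}` therein), and
loops in `U(n)` by families of unitary endomorphisms parametrised by the circle. -/


instance : Fact ((0:ℝ) < 1) := ⟨one_pos⟩

/-- The circle `S¹`, additively. -/
abbrev Circ : Type := AddCircle (1 : ℝ)

/-- The model for (the continuous vectors of) `H = L²(S¹, ℂⁿ)`. -/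
abbrev Hsp (n : ℕ) : Type := C(Circ, Evec n)

variable {n : ℕ}

/-- The point of the circle where loops are evaluated to give `Φ_{-1}` (`λ = -1`). -/
def half : Circ := ((2⁻¹ : ℝ) : Circ)

/-- Multiplication by `λ^k` on `H`. -/
def lamZ (k : ℤ) : Hsp n →ₗ[ℂ] Hsp n where
  toFun v := ⟨fun x => fourier k x • v x, ((fourier k).continuous.smul v.continuous)⟩
  map_add' v w := by
    ext x
    simp [smul_add]
  map_smul' c v := by
    ext x
    simp only [ContinuousMap.coe_mk, ContinuousMap.smul_apply, RingHom.id_apply]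
    rw [smul_comm]

/-- The involution `ν : λ ↦ -λ` of `H`. -/
def nuL : Hsp n →ₗ[ℂ] Hsp n where
  toFun v := ⟨fun x => v (x + half), v.continuous.comp (continuous_add_right half)⟩
  map_add' v w := by ext x; simp
  map_smul' c v := by ext x; simp

/-- Conjugation on `H`: if `v = Σ λ^i v_i` then `conjH v = Σ λ^i (conj v_i)`, i.e.
`(conjH v)(λ) = conj (v (λ̄))`. -/
def conjH (v : Hsp n) : Hsp n :=
  ⟨fun x => conjE (v (-x)), conjE_continuous.comp (v.continuous.comp continuous_neg)⟩

/-- The complex conjugate of a subspace of `H`. -/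
def conjSubH (K : Submodule ℂ (Hsp n)) : Submodule ℂ (Hsp n) where
  carrier := conjH '' (K : Set (Hsp n))
  add_mem' := by
    rintro _ _ ⟨a, ha, rfl⟩ ⟨b, hb, rfl⟩
    refine ⟨a + b, K.add_mem ha hb, ?_⟩
    ext x
    simp [conjH, conjE_add]
  zero_mem' := by
    refine ⟨0, K.zero_mem, ?_⟩
    ext x
    simp [conjH, conjE_zero]
  smul_mem' := by
    rintro c _ ⟨a, ha, rfl⟩
    refine ⟨(starRingEnd ℂ c) • a, K.smul_mem _ ha, ?_⟩
    ext x
    simp [conjH, conjE_smul]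

/-- `H_+`: the closed span of `{λ^k e : k ∈ ℕ, e ∈ ℂⁿ}` in `H`. -/
def Hplus : Submodule ℂ (Hsp n) :=
  (Submodule.span ℂ {v : Hsp n | ∃ (k : ℕ) (e : Evec n), ∀ x, v x = fourier (k : ℤ) x • e}).topologicalClosure

/-- The `L²` orthogonal complement of a subspace of `H`. -/
def HOrth (K : Submodule ℂ (Hsp n)) : Submodule ℂ (Hsp n) where
  carrier := {v | ∀ w ∈ K, ∫ x : Circ, (inner ℂ (w x) (v x) : ℂ) ∂AddCircle.haarAddCircle = 0}
  add_mem' := by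
    intro a b ha hb w hw
    have hia : MeasureTheory.Integrable (fun x : Circ => (inner ℂ (w x) (a x) : ℂ))
        AddCircle.haarAddCircle :=
      MeasureTheory.integrableOn_univ.mp
        (((Continuous.inner w.continuous a.continuous).locallyIntegrable).integrableOn_isCompact
          isCompact_univ)
    have hib : MeasureTheory.Integrable (fun x : Circ => (inner ℂ (w x) (b x) : ℂ))
        AddCircle.haarAddCircle :=
      MeasureTheory.integrableOn_univ.mp
        (((Continuous.inner w.continuous b.continuous).locallyIntegrable).integrableOn_isCompact
          isCompact_univ)
    have : (fun x : Circ => (inner ℂ (w x) ((a + b) x) : ℂ)) =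
        fun x : Circ => (inner ℂ (w x) (a x) : ℂ) + (inner ℂ (w x) (b x) : ℂ) := by
      funext x
      simp [inner_add_right]
    rw [this, MeasureTheory.integral_add hia hib, ha w hw, hb w hw, add_zero]
  zero_mem' := by
    intro w hw
    simp
  smul_mem' := by
    intro c a ha w hw
    have : (fun x : Circ => (inner ℂ (w x) ((c • a) x) : ℂ)) =
        fun x : Circ => c • (inner ℂ (w x) (a x) : ℂ) := by
      funext x
      simp [inner_smul_right]
    rw [this, MeasureTheory.integral_smul, ha w hw, smul_zero]

/-- The image `γ S` of a subspace `S` of `H` under (pointwise application of) a loop `γ`. -/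
def loopImage (γ : Circ → (Evec n →L[ℂ] Evec n)) (S : Submodule ℂ (Hsp n)) :
    Submodule ℂ (Hsp n) where
  carrier := {v | ∃ w ∈ S, ∀ x, v x = γ x (w x)}
  add_mem' := by
    rintro a b ⟨wa, hwa, ha⟩ ⟨wb, hwb, hb⟩
    refine ⟨wa + wb, S.add_mem hwa hwb, fun x => ?_⟩
    simp [ha x, hb x]
  zero_mem' := ⟨0, S.zero_mem, fun x => by simp⟩
  smul_mem' := by
    rintro c a ⟨w, hw, h⟩
    refine ⟨c • w, S.smul_mem c hw, fun x => ?_⟩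
    simp [h x]

/-- `P_0 ∘ Φ⁻¹` : the zeroth Fourier coefficient of `Φ⁻¹ v` (with `Φ⁻¹ = star Φ`). -/
def P0inv (Φ : ℂ → Circ → (Evec n →L[ℂ] Evec n)) (z : ℂ) (v : Hsp n) : Evec n :=
  fourierCoeff (fun x => star (Φ z x) (v x)) 0

/-- The subbundle `Z = P_0 ∘ Φ⁻¹ (Y)` of `ℂⁿ` associated to a subbundle `Y` of `W`. -/
def Zof (Φ : ℂ → Circ → (Evec n →L[ℂ] Evec n)) (Y : ℂ → Submodule ℂ (Hsp n)) (z : ℂ) :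
    Submodule ℂ (Evec n) :=
  Submodule.span ℂ ((P0inv Φ z) '' (Y z : Set (Hsp n)))

/-- The Grassmannian model `W = Φ H_+`. -/
def Wmodel (Φ : ℂ → Circ → (Evec n →L[ℂ] Evec n)) (z : ℂ) : Submodule ℂ (Hsp n) :=
  loopImage (Φ z) Hplus

/-- A smooth map `M → Ω U(n)` into the based loop group. -/
def IsLoopMap (M : Set ℂ) (Φ : ℂ → Circ → (Evec n →L[ℂ] Evec n)) : Prop :=
  (∀ z ∈ M, ∀ x, Φ z x ∈ unitary (Evec n →L[ℂ] Evec n)) ∧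
  (∀ z ∈ M, Φ z 0 = 1) ∧
  (∀ z ∈ M, ContDiff ℝ (⊤ : ℕ∞) (fun θ : ℝ => Φ z (θ : Circ))) ∧
  (∀ x, ContDiffOn ℝ (⊤ : ℕ∞) (fun z => Φ z x) M)

/-- An extended solution: `Φ⁻¹ ∂_z Φ = (1 - λ⁻¹) A`. -/
def IsExtendedSolution (M : Set ℂ) (Φ : ℂ → Circ → (Evec n →L[ℂ] Evec n)) : Prop :=
  IsLoopMap M Φ ∧ ∃ A : ℂ → (Evec n →L[ℂ] Evec n), ∀ z ∈ M, ∀ x,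
    star (Φ z x) * wz (fun w => Φ w x) z = (1 - fourier (-1) x) • A z

/-- `Φ` is an extended solution associated to the harmonic map `φ`:
`Φ⁻¹ ∂_z Φ = (1 - λ⁻¹) A_z^φ`. -/
def IsAssociatedExtSol (M : Set ℂ) (φ : ℂ → (Evec n →L[ℂ] Evec n))
    (Φ : ℂ → Circ → (Evec n →L[ℂ] Evec n)) : Prop :=
  IsLoopMap M Φ ∧ ∀ z ∈ M, ∀ x,
    star (Φ z x) * wz (fun w => Φ w x) z = (1 - fourier (-1) x) • Az φ z

/-- `Φ` is `ν`-invariant: `Φ_λ Φ_{-1} = Φ_{-λ}`. -/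
def IsNuInvariant (M : Set ℂ) (Φ : ℂ → Circ → (Evec n →L[ℂ] Evec n)) : Prop :=
  ∀ z ∈ M, ∀ x, Φ z x * Φ z half = Φ z (x + half)

/-- `Φ` is polynomial of degree at most `r`: `Φ = Σ_{k=0}^r λ^k T_k`. -/
def IsPolynomialOfDegLe (M : Set ℂ) (Φ : ℂ → Circ → (Evec n →L[ℂ] Evec n)) (r : ℕ) : Prop :=
  ∃ T : ℕ → ℂ → (Evec n →L[ℂ] Evec n), ∀ z ∈ M, ∀ x,
    Φ z x = ∑ k ∈ Finset.range (r + 1), fourier (k : ℤ) x • T k z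

/-- `Φ` is polynomial of degree exactly `r`. -/
def IsPolynomialOfDeg (M : Set ℂ) (Φ : ℂ → Circ → (Evec n →L[ℂ] Evec n)) (r : ℕ) : Prop :=
  IsPolynomialOfDegLe M Φ r ∧ ∀ r' < r, ¬ IsPolynomialOfDegLe M Φ r'

/-- Evaluation `Φ_{-1}` of a loop at `λ = -1`. -/
def evalm1 (Φ : ℂ → Circ → (Evec n →L[ℂ] Evec n)) (z : ℂ) : Evec n →L[ℂ] Evec n :=
  Φ z half

/-- The subbundle of `ℂⁿ` (point of the Grassmannian) corresponding to an involutive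
unitary `g` under the Cartan embedding: its `(+1)`-eigenspace. -/
def grassOf (g : Evec n →L[ℂ] Evec n) : Submodule ℂ (Evec n) :=
  LinearMap.ker ((g - 1 : Evec n →L[ℂ] Evec n) : Evec n →ₗ[ℂ] Evec n)

/-- `φ : M → U(n)` has finite uniton number (at most) `r` : it admits a polynomial associated
extended solution of degree at most `r`. -/
def HasUnitonNumberLe (M : Set ℂ) (φ : ℂ → (Evec n →L[ℂ] Evec n)) (r : ℕ) : Prop :=
  ∃ Φ, IsAssociatedExtSol M φ Φ ∧ IsExtendedSolution M Φ ∧ IsPolynomialOfDegLe M Φ r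

/-- `φ` has (minimal) uniton number `r`. -/
def HasUnitonNumber (M : Set ℂ) (φ : ℂ → (Evec n →L[ℂ] Evec n)) (r : ℕ) : Prop :=
  HasUnitonNumberLe M φ r ∧ ∀ r' < r, ¬ HasUnitonNumberLe M φ r'

/-- An `F`-filtration of `W = Φ H_+` of length `t` :
`W = Y_0 ⊃ Y_1 ⊃ ⋯ ⊃ Y_t ⊃ Y_{t+1} = λ W` by `λ`-closed holomorphic subbundles such that
`F = λ ∂_z` maps (smooth) sections of `Y_i` into `Y_{i+1}`. -/
def IsFFiltration (M : Set ℂ) (W : ℂ → Submodule ℂ (Hsp n)) (t : ℕ)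
    (Y : ℕ → ℂ → Submodule ℂ (Hsp n)) : Prop :=
  (∀ z ∈ M, Y 0 z = W z) ∧
  (∀ z ∈ M, Y (t + 1) z = (W z).map (lamZ 1)) ∧
  (∀ i ≤ t, ∀ z ∈ M, Y (i + 1) z ≤ Y i z) ∧
  (∀ i ≤ t + 1, ∀ z ∈ M, (Y i z).map (lamZ 1) ≤ Y i z) ∧
  (∀ i ≤ t + 1, ∀ s : ℂ → Hsp n, ContDiff ℝ (⊤ : ℕ∞) s → (∀ z ∈ M, s z ∈ Y i z) →
    ∀ z ∈ M, wzbar s z ∈ Y i z) ∧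
  (∀ i ≤ t, ∀ s : ℂ → Hsp n, ContDiff ℝ (⊤ : ℕ∞) s → (∀ z ∈ M, s z ∈ Y i z) →
    ∀ z ∈ M, lamZ 1 (wz s z) ∈ Y (i + 1) z)

/-- The canonical `F`-filtration `Y_i = W ∩ λ^i H_+ + λ W` of a polynomial extended
solution. -/
def canonicalY (W : ℂ → Submodule ℂ (Hsp n)) (i : ℕ) (z : ℂ) : Submodule ℂ (Hsp n) :=
  (W z ⊓ Hplus.map ((lamZ (i : ℤ) : Hsp n →ₗ[ℂ] Hsp n))) ⊔ (W z).map (lamZ 1)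

/-- The canonical `A_z^φ`-filtration `Z_i = P_0 ∘ Φ⁻¹ (Y_i)` of a polynomial extended
solution. -/
def canonicalZ (Φ : ℂ → Circ → (Evec n →L[ℂ] Evec n)) (i : ℕ) (z : ℂ) :
    Submodule ℂ (Evec n) :=
  Zof Φ (canonicalY (Wmodel Φ) i) z

/-- The legs `ψ_i = Z_i ⊖ Z_{i+1}` of the canonical filtration. -/
def canonicalLeg (Φ : ℂ → Circ → (Evec n →L[ℂ] Evec n)) (i : ℕ) (z : ℂ) :
    Submodule ℂ (Evec n) :=
  canonicalZ Φ i z ⊓ (canonicalZ Φ (i + 1) z)ᗮ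

/-- `Φ` is normalized (all legs of the canonical filtration are non-zero). -/
def IsNormalized (M : Set ℂ) (Φ : ℂ → Circ → (Evec n →L[ℂ] Evec n)) (r : ℕ) : Prop :=
  ∀ i ≤ r, ∀ z ∈ M, canonicalLeg Φ i z ≠ ⊥

/-- `Φ` is real of degree `r` : `Φ = λ^r conj Φ`. -/
def IsRealOfDeg (M : Set ℂ) (Φ : ℂ → Circ → (Evec n →L[ℂ] Evec n)) (r : ℤ) : Prop :=
  ∀ z ∈ M, ∀ x, Φ z x = fourier r x • conjOp (Φ z (-x))


/-! ### Auxiliary lemmas for statement 8 -/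

namespace S8

open MeasureTheory

variable {n : ℕ}

lemma half_add_half : (half + half : Circ) = 0 := by
  have : ((2⁻¹ : ℝ) : Circ) + ((2⁻¹ : ℝ) : Circ) = (((2⁻¹ + 2⁻¹ : ℝ)) : Circ) := by norm_cast
  rw [half, this]; norm_num

lemma fourier_shift (k : ℤ) (x y : Circ) : fourier k (x + y) = fourier k x * fourier k y := by
  rw [fourier_apply, fourier_apply, fourier_apply, zsmul_add, AddCircle.toCircle_add,
    Circle.coe_mul]

lemma nuL_apply (v : Hsp n) (x : Circ) : nuL v x = v (x + half) := rfl

lemma lamZ_apply (k : ℤ) (v : Hsp n) (x : Circ) : lamZ k v x = fourier k x • v x := rfl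

lemma nuL_nuL (v : Hsp n) : nuL (nuL v) = v := by
  ext x
  simp only [nuL_apply, add_assoc, half_add_half, add_zero]

/-- Integrability of continuous functions on the circle. -/
lemma integrable_cont {E : Type*} [NormedAddCommGroup E] {F : Circ → E} (h : Continuous F) :
    Integrable F AddCircle.haarAddCircle :=
  MeasureTheory.integrableOn_univ.mp
    ((h.locallyIntegrable).integrableOn_isCompact isCompact_univ)

lemma fourierCoeff_zero_eq {E : Type} [NormedAddCommGroup E] [NormedSpace ℂ E] (f : Circ → E) :
    fourierCoeff f 0 = ∫ x : Circ, f x ∂AddCircle.haarAddCircle := by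
  unfold fourierCoeff
  have h : (fun t : Circ => fourier (-0 : ℤ) t • f t) = f := by
    funext x; rw [neg_zero, fourier_zero, one_smul]
  rw [h]

/-- Translation invariance of the mean. -/
lemma integral_shift {E : Type*} [NormedAddCommGroup E] [NormedSpace ℝ E] (f : Circ → E)
    (c : Circ) :
    ∫ x : Circ, f (x + c) ∂AddCircle.haarAddCircle = ∫ x : Circ, f x ∂AddCircle.haarAddCircle :=
  integral_add_right_eq_self f c

/-- The mean of `fourier k` vanishes for `k ≠ 0`. -/
lemma integral_fourier {k : ℤ} (hk : k ≠ 0) :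
    ∫ x : Circ, fourier k x ∂AddCircle.haarAddCircle = 0 :=
  integral_eq_zero_of_add_right_eq_neg (μ := AddCircle.haarAddCircle)
    (fourier_add_half_inv_index hk one_pos)

/-- Norms of the generators. -/
lemma norm_lamZ_le (k : ℤ) (v : Hsp n) : ‖lamZ k v‖ ≤ ‖v‖ := by
  refine (ContinuousMap.norm_le _ (norm_nonneg v)).2 fun x => ?_
  rw [lamZ_apply, norm_smul, show ‖fourier k x‖ = 1 from Circle.norm_coe _, one_mul]
  exact v.norm_coe_le_norm x

lemma continuous_lamZ (k : ℤ) : Continuous (lamZ k : Hsp n →ₗ[ℂ] Hsp n) :=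
  AddMonoidHomClass.continuous_of_bound (lamZ k) 1 fun v => by simpa using norm_lamZ_le k v

lemma continuous_nuL : Continuous (nuL : Hsp n →ₗ[ℂ] Hsp n) :=
  AddMonoidHomClass.continuous_of_bound (nuL (n := n)) 1 fun v => by
    simpa using (ContinuousMap.norm_le _ (norm_nonneg v)).2 fun x => v.norm_coe_le_norm (x + half)

/-- Pointwise application of a fixed operator, as a linear map on `Hsp`. -/
def constOp (A : Evec n →L[ℂ] Evec n) : Hsp n →ₗ[ℂ] Hsp n :=
  A.compLeftContinuous ℂ Circ

lemma constOp_apply (A : Evec n →L[ℂ] Evec n) (v : Hsp n) (x : Circ) :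
    constOp A v x = A (v x) := rfl

lemma continuous_constOp (A : Evec n →L[ℂ] Evec n) : Continuous (constOp A) :=
  AddMonoidHomClass.continuous_of_bound (constOp A) ‖A‖ fun v => by
    refine (ContinuousMap.norm_le _ (by positivity)).2 fun x => ?_
    calc ‖A (v x)‖ ≤ ‖A‖ * ‖v x‖ := A.le_opNorm _
    _ ≤ ‖A‖ * ‖v‖ := by
        exact mul_le_mul_of_nonneg_left (v.norm_coe_le_norm x) (norm_nonneg A)

/-- The generating set of `Hplus`. -/
def genSet (n : ℕ) : Set (Hsp n) :=
  {v : Hsp n | ∃ (k : ℕ) (e : Evec n), ∀ x, v x = fourier (k : ℤ) x • e}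

lemma Hplus_eq : (Hplus : Submodule ℂ (Hsp n)) =
    (Submodule.span ℂ (genSet n)).topologicalClosure := rfl

lemma genSet_subset_Hplus : genSet n ⊆ (Hplus : Submodule ℂ (Hsp n)) := fun v hv =>
  (Submodule.le_topologicalClosure _) (Submodule.subset_span hv)

/-- Stability of `Hplus` under continuous linear maps preserving the generators. -/
lemma Hplus_stable (T : Hsp n →ₗ[ℂ] Hsp n) (hT : Continuous T)
    (h : ∀ v ∈ genSet n, T v ∈ (Hplus : Submodule ℂ (Hsp n))) :
    ∀ v ∈ (Hplus : Submodule ℂ (Hsp n)), T v ∈ (Hplus : Submodule ℂ (Hsp n)) := by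
  have hspan : ∀ v ∈ Submodule.span ℂ (genSet n), T v ∈ (Hplus : Submodule ℂ (Hsp n)) := by
    intro v hv
    induction hv using Submodule.span_induction with
    | mem v hv => exact h v hv
    | zero => simpa using Hplus.zero_mem
    | add a b _ _ ha hb => rw [map_add]; exact Hplus.add_mem ha hb
    | smul c a _ ha => rw [T.map_smul]; exact Hplus.smul_mem c ha
  intro v hv
  have hmapsto : Set.MapsTo (⇑T) ((Submodule.span ℂ (genSet n) : Submodule ℂ (Hsp n)) :
      Set (Hsp n)) (((Hplus : Submodule ℂ (Hsp n)) : Set (Hsp n))) := hspan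
  have h2 := hmapsto.closure hT
  have hclosed : IsClosed (((Hplus : Submodule ℂ (Hsp n)) : Set (Hsp n))) := by
    rw [Hplus_eq]
    exact (Submodule.span ℂ (genSet n)).isClosed_topologicalClosure
  have hv' : v ∈ closure (Submodule.span ℂ (genSet n) : Set (Hsp n)) := hv
  have := h2 hv'
  rwa [hclosed.closure_eq] at this


/-! ### Stability of `Hplus` -/

lemma constOp_mem_Hplus (A : Evec n →L[ℂ] Evec n) :
    ∀ v ∈ (Hplus : Submodule ℂ (Hsp n)), constOp A v ∈ (Hplus : Submodule ℂ (Hsp n)) := by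
  refine Hplus_stable _ (continuous_constOp A) ?_
  rintro v ⟨k, e, hv⟩
  refine genSet_subset_Hplus ⟨k, A e, fun x => ?_⟩
  rw [constOp_apply, hv x, A.map_smul]

lemma nuL_mem_Hplus :
    ∀ v ∈ (Hplus : Submodule ℂ (Hsp n)), nuL v ∈ (Hplus : Submodule ℂ (Hsp n)) := by
  refine Hplus_stable _ continuous_nuL ?_
  rintro v ⟨k, e, hv⟩
  have : nuL v = (fourier (k : ℤ) half : ℂ) • v := by
    ext x
    rw [nuL_apply, hv (x + half), ContinuousMap.smul_apply, hv x, fourier_shift, smul_smul,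
      mul_comm]
  rw [this]
  exact Hplus.smul_mem _ (genSet_subset_Hplus ⟨k, e, hv⟩)

lemma lamZ_one_mem_Hplus :
    ∀ v ∈ (Hplus : Submodule ℂ (Hsp n)), lamZ 1 v ∈ (Hplus : Submodule ℂ (Hsp n)) := by
  refine Hplus_stable _ (continuous_lamZ 1) ?_
  rintro v ⟨k, e, hv⟩
  refine genSet_subset_Hplus ⟨k + 1, e, fun x => ?_⟩
  rw [lamZ_apply, hv x, smul_smul, ← fourier_add,
    show (1 + (k : ℤ)) = ((k + 1 : ℕ) : ℤ) by push_cast; ring]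

/-- The mean, as a linear map `Hsp n →ₗ[ℂ] Evec n`. -/
def coeff0 : Hsp n →ₗ[ℂ] Evec n where
  toFun v := ∫ x : Circ, v x ∂AddCircle.haarAddCircle
  map_add' v w := by
    rw [← MeasureTheory.integral_add (integrable_cont v.continuous)
      (integrable_cont w.continuous)]
    rfl
  map_smul' c v := by
    rw [← MeasureTheory.integral_smul]
    rfl

lemma coeff0_apply (v : Hsp n) : coeff0 v = ∫ x : Circ, v x ∂AddCircle.haarAddCircle := rfl

lemma norm_coeff0_le (v : Hsp n) : ‖coeff0 v‖ ≤ ‖v‖ := by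
  rw [coeff0_apply]
  calc ‖∫ x : Circ, v x ∂AddCircle.haarAddCircle‖
      ≤ ‖v‖ * (AddCircle.haarAddCircle Set.univ).toReal :=
        MeasureTheory.norm_integral_le_of_norm_le_const
          (Filter.Eventually.of_forall fun x => v.norm_coe_le_norm x)
    _ = ‖v‖ := by simp

/-- The constant inclusion `Evec n →ₗ[ℂ] Hsp n`. -/
def constFn : Evec n →ₗ[ℂ] Hsp n where
  toFun e := ContinuousMap.const Circ e
  map_add' _ _ := rfl
  map_smul' _ _ := rfl

/-- `S v = v - v₀`. -/
def Smap : Hsp n →ₗ[ℂ] Hsp n := LinearMap.id - constFn.comp coeff0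

lemma Smap_apply (v : Hsp n) (x : Circ) : Smap v x = v x - coeff0 v := rfl

/-- `T v = λ⁻¹ (v - v₀)`. -/
def Tmap : Hsp n →ₗ[ℂ] Hsp n :=
  (lamZ (-1)).comp Smap

lemma continuous_Tmap : Continuous (Tmap : Hsp n →ₗ[ℂ] Hsp n) := by
  have h1 : Continuous (fun v : Hsp n => Smap v) := by
    refine AddMonoidHomClass.continuous_of_bound (Smap (n := n)) 2 fun v => ?_
    have : ∀ x : Circ, ‖Smap v x‖ ≤ 2 * ‖v‖ := by
      intro x
      rw [Smap_apply]
      calc ‖v x - coeff0 v‖ ≤ ‖v x‖ + ‖coeff0 v‖ := norm_sub_le _ _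
        _ ≤ ‖v‖ + ‖v‖ := add_le_add (v.norm_coe_le_norm x) (norm_coeff0_le v)
        _ = 2 * ‖v‖ := by ring
    exact (ContinuousMap.norm_le _ (by positivity)).2 this
  exact (continuous_lamZ (-1)).comp h1

lemma coeff0_gen (k : ℕ) (e : Evec n) (v : Hsp n) (hv : ∀ x, v x = fourier (k : ℤ) x • e) :
    coeff0 v = if k = 0 then e else 0 := by
  have : coeff0 v = (∫ x : Circ, fourier (k : ℤ) x ∂AddCircle.haarAddCircle) • e := by
    rw [coeff0_apply]
    have h : (fun x : Circ => v x) = fun x : Circ => fourier (k : ℤ) x • e := funext hv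
    rw [h, integral_smul_const]
  rw [this]
  by_cases hk : k = 0
  · subst hk
    simp [fourier_zero]
  · rw [integral_fourier (by exact_mod_cast hk), zero_smul, if_neg hk]

lemma Tmap_mem_Hplus :
    ∀ v ∈ (Hplus : Submodule ℂ (Hsp n)), Tmap v ∈ (Hplus : Submodule ℂ (Hsp n)) := by
  refine Hplus_stable _ continuous_Tmap ?_
  rintro v ⟨k, e, hv⟩
  have hc := coeff0_gen k e v hv
  by_cases hk : k = 0
  · have : Tmap v = 0 := by
      subst hk
      rw [if_pos rfl] at hc
      have hsub : Smap v = 0 := by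
        ext x
        rw [Smap_apply, hc, hv x]
        norm_num
      show lamZ (-1) (Smap v) = 0
      rw [hsub, map_zero]
    rw [this]; exact Hplus.zero_mem
  · have hTv : Tmap v = lamZ (-1) v := by
      rw [if_neg hk] at hc
      show lamZ (-1) (Smap v) = _
      congr 1
      ext x
      rw [Smap_apply, hc, sub_zero]
    rw [hTv]
    obtain ⟨m, hm⟩ := Nat.exists_eq_succ_of_ne_zero hk
    subst hm
    refine genSet_subset_Hplus ⟨m, e, fun x => ?_⟩
    rw [lamZ_apply, hv x, smul_smul, ← fourier_add,
      show (-1 + ((m + 1 : ℕ) : ℤ)) = ((m : ℕ) : ℤ) by push_cast; ring]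

/-- Kernel lemma: an element of `Hplus` with vanishing mean lies in `λ Hplus`. -/
lemma mem_map_lamZ_of_coeff0 (v : Hsp n) (hv : v ∈ (Hplus : Submodule ℂ (Hsp n)))
    (h0 : coeff0 v = 0) : v ∈ (Hplus : Submodule ℂ (Hsp n)).map (lamZ 1) := by
  refine ⟨Tmap v, Tmap_mem_Hplus v hv, ?_⟩
  have hTv : Tmap v = lamZ (-1) v := by
    show lamZ (-1) (Smap v) = _
    congr 1
    ext x
    rw [Smap_apply, h0, sub_zero]
  rw [hTv]
  ext x
  rw [lamZ_apply, lamZ_apply, smul_smul, ← fourier_add]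
  norm_num

/-! ### Eigenspaces of an involutive unitary operator -/

section Invol

variable (f : Evec n →L[ℂ] Evec n)

lemma inner_map_map (hf : f ∈ unitary (Evec n →L[ℂ] Evec n)) (x y : Evec n) :
    (inner ℂ (f x) (f y) : ℂ) = inner ℂ x y := by
  have h1 : star f * f = 1 := hf.1
  have : (inner ℂ (f x) (f y) : ℂ) = inner ℂ x ((star f) (f y)) := by
    rw [ContinuousLinearMap.star_eq_adjoint, ContinuousLinearMap.adjoint_inner_right]
  rw [this, show (star f) (f y) = (star f * f) y from rfl, h1, ContinuousLinearMap.one_apply]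

variable {f}

lemma mem_grassOf_iff (v : Evec n) : v ∈ grassOf f ↔ f v = v := by
  unfold grassOf
  rw [LinearMap.mem_ker]
  constructor
  · intro h
    have h2 : f v - v = 0 := by
      have : (f - 1) v = f v - v := by
        rw [ContinuousLinearMap.sub_apply, ContinuousLinearMap.one_apply]
      rw [← this]; exact h
    exact sub_eq_zero.mp h2
  · intro h
    show (f - 1) v = 0
    rw [ContinuousLinearMap.sub_apply, ContinuousLinearMap.one_apply, h, sub_self]

end Invol

section Invol2

variable {f : Evec n →L[ℂ] Evec n}

lemma mem_kerP1_iff (v : Evec n) : v ∈ LinearMap.ker ((f + 1 : Evec n →L[ℂ] Evec n) : Evec n →ₗ[ℂ] Evec n) ↔ f v = -v := by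
  rw [LinearMap.mem_ker]
  constructor
  · intro h
    have : f v + v = 0 := by
      have h2 : (f + 1) v = f v + v := by
        rw [ContinuousLinearMap.add_apply, ContinuousLinearMap.one_apply]
      rw [← h2]; exact h
    exact eq_neg_of_add_eq_zero_left this
  · intro h
    show (f + 1) v = 0
    rw [ContinuousLinearMap.add_apply, ContinuousLinearMap.one_apply, h, neg_add_cancel]

/-- For an involutive unitary `f`, the orthogonal complement of the `+1`-eigenspace is the
`-1`-eigenspace. -/
lemma orth_grassOf (hf : f ∈ unitary (Evec n →L[ℂ] Evec n)) (h2 : f * f = 1) :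
    (grassOf f)ᗮ = LinearMap.ker ((f + 1 : Evec n →L[ℂ] Evec n) : Evec n →ₗ[ℂ] Evec n) := by
  have hff : ∀ v, f (f v) = v := fun v => by
    rw [show f (f v) = (f * f) v from rfl, h2, ContinuousLinearMap.one_apply]
  have hm : ∀ v : Evec n, (2⁻¹ : ℂ) • (v + f v) ∈ grassOf f := by
    intro v
    rw [mem_grassOf_iff, f.map_smul, f.map_add, hff]
    rw [add_comm]
  have hp : ∀ v : Evec n, (2⁻¹ : ℂ) • (v - f v) ∈ LinearMap.ker ((f + 1 : Evec n →L[ℂ] Evec n) : Evec n →ₗ[ℂ] Evec n) := by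
    intro v
    rw [mem_kerP1_iff, f.map_smul, f.map_sub, hff, ← smul_neg]
    congr 1
    abel
  have hker_le : LinearMap.ker ((f + 1 : Evec n →L[ℂ] Evec n) : Evec n →ₗ[ℂ] Evec n) ≤ (grassOf f)ᗮ := by
    intro u hu
    have hfu : f u = -u := (mem_kerP1_iff u).1 hu
    intro w hw
    have hfw : f w = w := (mem_grassOf_iff w).1 hw
    have h1 : (inner ℂ w u : ℂ) = inner ℂ (f w) (f u) := (inner_map_map f hf w u).symm
    rw [hfw, hfu, inner_neg_right] at h1
    have : (inner ℂ w u : ℂ) = 0 := by linear_combination h1 / 2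
    exact this
  apply le_antisymm
  · intro u hu
    set a := (2⁻¹ : ℂ) • (u + f u) with ha_def
    set b := (2⁻¹ : ℂ) • (u - f u) with hb_def
    have haG : a ∈ grassOf f := hm u
    have hbK : b ∈ LinearMap.ker ((f + 1 : Evec n →L[ℂ] Evec n) : Evec n →ₗ[ℂ] Evec n) := hp u
    have hab : a + b = u := by
      rw [ha_def, hb_def, ← smul_add]
      rw [show u + f u + (u - f u) = (2 : ℂ) • u by
        rw [two_smul]; abel]
      rw [smul_smul]
      norm_num
    have haO : a ∈ (grassOf f)ᗮ := by
      have : a = u - b := by rw [← hab]; abel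
      rw [this]
      exact Submodule.sub_mem _ hu (hker_le hbK)
    have ha0 : a = 0 := by
      have := haO a haG
      rwa [inner_self_eq_zero] at this
    have hsum : u + f u = 0 := by
      have h2 : (2⁻¹ : ℂ) • (u + f u) = 0 := ha0
      have := smul_eq_zero.mp h2
      rcases this with h | h
      · norm_num at h
      · exact h
    rw [mem_kerP1_iff]
    exact eq_neg_of_add_eq_zero_right hsum
  · exact hker_le

end Invol2

/-! ### The `z`-level analysis -/

section ZLevel

variable {g : Circ → (Evec n →L[ℂ] Evec n)}

lemma continuous_star_comp (hgc : Continuous g) : Continuous fun x => star (g x) := by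
  have h := (ContinuousLinearMap.adjoint (𝕜 := ℂ) (E := Evec n) (F := Evec n)).continuous
  have heq : (fun x => star (g x)) = fun x => ContinuousLinearMap.adjoint (g x) := by
    funext x; rw [ContinuousLinearMap.star_eq_adjoint]
  rw [heq]
  exact h.comp hgc

lemma continuous_starApp (hgc : Continuous g) (v : Hsp n) :
    Continuous fun x : Circ => star (g x) (v x) :=
  (continuous_star_comp hgc).clm_apply v.continuous

/-- `P_0 ∘ g⁻¹` as a linear map `Hsp n →ₗ[ℂ] Evec n`. -/
def PgL (g : Circ → (Evec n →L[ℂ] Evec n)) (hgc : Continuous g) : Hsp n →ₗ[ℂ] Evec n where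
  toFun v := fourierCoeff (fun x => star (g x) (v x)) 0
  map_add' v w := by
    rw [fourierCoeff_zero_eq, fourierCoeff_zero_eq, fourierCoeff_zero_eq]
    have heq : (fun x : Circ => star (g x) ((v + w) x)) =
        fun x : Circ => star (g x) (v x) + star (g x) (w x) := by
      funext x
      rw [ContinuousMap.add_apply, (star (g x)).map_add]
    rw [heq, MeasureTheory.integral_add (integrable_cont (continuous_starApp hgc v))
      (integrable_cont (continuous_starApp hgc w))]
  map_smul' c v := by
    rw [fourierCoeff_zero_eq, fourierCoeff_zero_eq]
    have heq : (fun x : Circ => star (g x) ((c • v) x)) =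
        fun x : Circ => c • star (g x) (v x) := by
      funext x
      rw [ContinuousMap.smul_apply, (star (g x)).map_smul]
    rw [heq, MeasureTheory.integral_smul]
    rfl

lemma PgL_apply (hgc : Continuous g) (v : Hsp n) :
    PgL g hgc v = fourierCoeff (fun x => star (g x) (v x)) 0 := rfl

/-- The key intertwining relation `P₀ ∘ g⁻¹ ∘ ν = g(½) ∘ P₀ ∘ g⁻¹`. -/
lemma PgL_nuL (hgc : Continuous g) (hu : ∀ x, g x ∈ unitary (Evec n →L[ℂ] Evec n))
    (hnu : ∀ x, g x * g half = g (x + half)) (v : Hsp n) :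
    PgL g hgc (nuL v) = g half (PgL g hgc v) := by
  have key : ∀ x : Circ, star (g x) (nuL v x) =
      g half (star (g (x + half)) (v (x + half))) := by
    intro x
    have h1 : star (g (x + half)) = star (g half) * star (g x) := by
      rw [← hnu x, star_mul]
    have h2 : g half * star (g (x + half)) = star (g x) := by
      rw [h1, ← mul_assoc, Unitary.mul_star_self_of_mem (hu half), one_mul]
    rw [nuL_apply]
    calc star (g x) (v (x + half)) = (g half * star (g (x + half))) (v (x + half)) := by
          rw [h2]
      _ = g half (star (g (x + half)) (v (x + half))) := rfl
  rw [PgL_apply, PgL_apply, fourierCoeff_zero_eq, fourierCoeff_zero_eq]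
  have heq : (fun x : Circ => star (g x) ((nuL v) x)) =
      fun x : Circ => g half (star (g (x + half)) (v (x + half))) := funext key
  have hint : MeasureTheory.Integrable (fun x : Circ => star (g (x + half)) (v (x + half)))
      AddCircle.haarAddCircle :=
    integrable_cont ((continuous_starApp hgc v).comp (continuous_add_right half))
  have h4 : ∫ x : Circ, g half (star (g (x + half)) (v (x + half))) ∂AddCircle.haarAddCircle =
      g half (∫ x : Circ, star (g (x + half)) (v (x + half)) ∂AddCircle.haarAddCircle) :=
    ContinuousLinearMap.integral_comp_comm _ hint
  rw [heq, h4, integral_shift (fun y : Circ => star (g y) (v y)) half]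

lemma PgL_of_loopImage (hgc : Continuous g)
    (hu : ∀ x, g x ∈ unitary (Evec n →L[ℂ] Evec n)) {v w : Hsp n}
    (hvw : ∀ x, v x = g x (w x)) : PgL g hgc v = coeff0 w := by
  rw [PgL_apply, fourierCoeff_zero_eq, coeff0_apply]
  have heq : (fun x : Circ => star (g x) (v x)) = fun x : Circ => w x := by
    funext x
    rw [hvw x]
    calc star (g x) (g x (w x)) = (star (g x) * g x) (w x) := rfl
      _ = w x := by rw [Unitary.star_mul_self_of_mem (hu x), ContinuousLinearMap.one_apply]
  rw [heq]

/-- Kernel lemma at the `W` level. -/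
lemma mem_lamW_of_PgL_zero (hgc : Continuous g)
    (hu : ∀ x, g x ∈ unitary (Evec n →L[ℂ] Evec n)) {v : Hsp n}
    (hv : v ∈ loopImage g Hplus) (h0 : PgL g hgc v = 0) :
    v ∈ (loopImage g Hplus).map (lamZ 1) := by
  obtain ⟨w, hw, hvw⟩ := hv
  have hc : coeff0 w = 0 := by rw [← PgL_of_loopImage hgc hu hvw]; exact h0
  obtain ⟨u, hu', huw⟩ := mem_map_lamZ_of_coeff0 w hw hc
  refine ⟨⟨fun x => g x (u x), hgc.clm_apply u.continuous⟩, ⟨u, hu', fun x => rfl⟩, ?_⟩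
  refine ContinuousMap.ext fun x => ?_
  show fourier 1 x • g x (u x) = v x
  rw [hvw x, ← (g x).map_smul]
  congr 1
  have h2 : w x = fourier 1 x • u x := by rw [← huw]; rfl
  rw [h2]

/-- `ν` preserves `W`. -/
lemma nuL_mem_loopImage (hgc : Continuous g)
    (hnu : ∀ x, g x * g half = g (x + half)) {v : Hsp n}
    (hv : v ∈ loopImage g Hplus) : nuL v ∈ loopImage g Hplus := by
  obtain ⟨w, hw, hvw⟩ := hv
  refine ⟨constOp (g half) (nuL w), constOp_mem_Hplus _ _ (nuL_mem_Hplus _ hw), fun x => ?_⟩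
  rw [nuL_apply, hvw (x + half), ← hnu x]
  rfl

/-- `ν` preserves `λ W`. -/
lemma nuL_mem_map_lamW (hgc : Continuous g)
    (hnu : ∀ x, g x * g half = g (x + half)) {v : Hsp n}
    (hv : v ∈ (loopImage g Hplus).map (lamZ 1)) :
    nuL v ∈ (loopImage g Hplus).map (lamZ 1) := by
  obtain ⟨v', hv', rfl⟩ := hv
  have h1 : nuL (lamZ 1 v') = (fourier (1 : ℤ) half : ℂ) • lamZ 1 (nuL v') := by
    refine ContinuousMap.ext fun x => ?_
    rw [nuL_apply]
    show fourier 1 (x + half) • v' (x + half) =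
      ((fourier (1 : ℤ) half : ℂ) • lamZ 1 (nuL v')) x
    rw [ContinuousMap.smul_apply, lamZ_apply, nuL_apply, fourier_shift, smul_smul, mul_comm]
  rw [h1]
  exact Submodule.smul_mem _ _
    (Submodule.mem_map_of_mem (nuL_mem_loopImage hgc hnu hv'))

end ZLevel

/-- Continuity of a loop in the circle variable. -/
lemma loop_continuous {M : Set ℂ} {Φ : ℂ → Circ → (Evec n →L[ℂ] Evec n)}
    (h : IsLoopMap M Φ) {z : ℂ} (hz : z ∈ M) : Continuous (Φ z) := by
  have h3 : Continuous fun θ : ℝ => Φ z (θ : Circ) := (h.2.2.1 z hz).continuous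
  rw [(QuotientAddGroup.isQuotientMap_mk _).continuous_iff]
  exact h3

/-! ### Assembly -/

section Main

variable {M : Set ℂ} {Φ : ℂ → Circ → (Evec n →L[ℂ] Evec n)}

lemma span_image_eq_map (hgc : Continuous (Φ z)) (K : Submodule ℂ (Hsp n)) :
    Submodule.span ℂ ((P0inv Φ z) '' (K : Set (Hsp n))) =
      Submodule.map (PgL (Φ z) hgc) K := by
  rw [show (P0inv Φ z) = ⇑(PgL (Φ z) hgc) from rfl, Submodule.span_image, Submodule.span_eq]

variable {Y : ℂ → Submodule ℂ (Hsp n)} {z : ℂ}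

/-- The involution property of `φ = Φ_{-1}`. -/
lemma phi_invol (hΦ : IsExtendedSolution M Φ) (hnuI : IsNuInvariant M Φ) (hz : z ∈ M) :
    Φ z half * Φ z half = 1 := by
  rw [hnuI z hz half, half_add_half, hΦ.1.2.1 z hz]

/-- Forward: closedness under `ν` implies the splitting. -/
lemma forward_split (hΦ : IsExtendedSolution M Φ) (hnuI : IsNuInvariant M Φ) (hz : z ∈ M)
    (hY : (Wmodel Φ z).map (lamZ 1) ≤ Y z ∧ Y z ≤ Wmodel Φ z)
    (hcl : (Y z).map nuL ≤ Y z) :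
    Zof Φ Y z = (Zof Φ Y z ⊓ grassOf (evalm1 Φ z)) ⊔
      (Zof Φ Y z ⊓ (grassOf (evalm1 Φ z))ᗮ) := by
  have hgc : Continuous (Φ z) := loop_continuous hΦ.1 hz
  have hu : ∀ x, Φ z x ∈ unitary (Evec n →L[ℂ] Evec n) := hΦ.1.1 z hz
  have hnuz : ∀ x, Φ z x * Φ z half = Φ z (x + half) := hnuI z hz
  have hf2 : Φ z half * Φ z half = 1 := phi_invol hΦ hnuI hz
  have hff : ∀ ξ : Evec n, Φ z half (Φ z half ξ) = ξ := fun ξ => by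
    rw [show Φ z half (Φ z half ξ) = (Φ z half * Φ z half) ξ from rfl, hf2,
      ContinuousLinearMap.one_apply]
  set f := Φ z half with hf_def
  have horth : (grassOf f)ᗮ = LinearMap.ker ((f + 1 : Evec n →L[ℂ] Evec n) : Evec n →ₗ[ℂ] Evec n) := orth_grassOf (hu half) hf2
  have hZ : Zof Φ Y z = Submodule.map (PgL (Φ z) hgc) (Y z) := by
    unfold Zof; exact span_image_eq_map hgc (Y z)
  -- `f` maps `Z` into `Z`
  have hfZ : ∀ ξ ∈ Zof Φ Y z, f ξ ∈ Zof Φ Y z := by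
    intro ξ hξ
    rw [hZ] at hξ ⊢
    obtain ⟨v, hv, rfl⟩ := hξ
    refine ⟨nuL v, hcl (Submodule.mem_map_of_mem hv), ?_⟩
    exact PgL_nuL hgc hu hnuz v
  apply le_antisymm
  · intro ξ hξ
    have hfξ : f ξ ∈ Zof Φ Y z := hfZ ξ hξ
    set a := (2⁻¹ : ℂ) • (ξ + f ξ) with ha_def
    set b := (2⁻¹ : ℂ) • (ξ - f ξ) with hb_def
    have haZ : a ∈ Zof Φ Y z := Submodule.smul_mem _ _ (Submodule.add_mem _ hξ hfξ)
    have hbZ : b ∈ Zof Φ Y z := Submodule.smul_mem _ _ (Submodule.sub_mem _ hξ hfξ)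
    have haG : a ∈ grassOf f := by
      rw [mem_grassOf_iff, ha_def, f.map_smul, f.map_add, hff, add_comm]
    have hbG : b ∈ (grassOf f)ᗮ := by
      rw [horth, mem_kerP1_iff, hb_def, f.map_smul, f.map_sub, hff, ← smul_neg]
      congr 1
      abel
    have hab : a + b = ξ := by
      rw [ha_def, hb_def, ← smul_add,
        show ξ + f ξ + (ξ - f ξ) = (2 : ℂ) • ξ by rw [two_smul]; abel, smul_smul]
      norm_num
    rw [← hab]
    exact Submodule.add_mem _ (Submodule.mem_sup_left ⟨haZ, haG⟩)
      (Submodule.mem_sup_right ⟨hbZ, hbG⟩)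
  · exact sup_le inf_le_left inf_le_left

/-- Backward: the splitting implies closedness under `ν`. -/
lemma backward_closed (hΦ : IsExtendedSolution M Φ) (hnuI : IsNuInvariant M Φ) (hz : z ∈ M)
    (hY : (Wmodel Φ z).map (lamZ 1) ≤ Y z ∧ Y z ≤ Wmodel Φ z)
    (hsp : Zof Φ Y z = (Zof Φ Y z ⊓ grassOf (evalm1 Φ z)) ⊔
      (Zof Φ Y z ⊓ (grassOf (evalm1 Φ z))ᗮ)) :
    (Y z).map nuL ≤ Y z := by
  have hgc : Continuous (Φ z) := loop_continuous hΦ.1 hz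
  have hu : ∀ x, Φ z x ∈ unitary (Evec n →L[ℂ] Evec n) := hΦ.1.1 z hz
  have hnuz : ∀ x, Φ z x * Φ z half = Φ z (x + half) := hnuI z hz
  have hf2 : Φ z half * Φ z half = 1 := phi_invol hΦ hnuI hz
  set f := Φ z half with hf_def
  have horth : (grassOf f)ᗮ = LinearMap.ker ((f + 1 : Evec n →L[ℂ] Evec n) : Evec n →ₗ[ℂ] Evec n) := orth_grassOf (hu half) hf2
  have hZ : Zof Φ Y z = Submodule.map (PgL (Φ z) hgc) (Y z) := by
    unfold Zof; exact span_image_eq_map hgc (Y z)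
  rintro _ ⟨v, hv, rfl⟩
  have hξZ : PgL (Φ z) hgc v ∈ Zof Φ Y z := by
    rw [hZ]; exact Submodule.mem_map_of_mem hv
  rw [hsp] at hξZ
  obtain ⟨a, ha, b, hb, hab⟩ := Submodule.mem_sup.1 hξZ
  have hfa : f a = a := (mem_grassOf_iff a).1 ha.2
  have hfb : f b = -b := (mem_kerP1_iff b).1 (horth ▸ hb.2)
  have hfξ : f (PgL (Φ z) hgc v) = a - b := by
    rw [← hab, f.map_add, hfa, hfb, sub_eq_add_neg]
  have habZ : a - b ∈ Zof Φ Y z := Submodule.sub_mem _ ha.1 hb.1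
  rw [hZ] at habZ
  obtain ⟨y, hy, hyP⟩ := habZ
  have hνW : nuL v ∈ Wmodel Φ z := nuL_mem_loopImage hgc hnuz (hY.2 hv)
  have hsubW : nuL v - y ∈ Wmodel Φ z := Submodule.sub_mem _ hνW (hY.2 hy)
  have hP0 : PgL (Φ z) hgc (nuL v - y) = 0 := by
    rw [map_sub, PgL_nuL hgc hu hnuz, hyP, hfξ, sub_self]
  have hker : nuL v - y ∈ (Wmodel Φ z).map (lamZ 1) :=
    mem_lamW_of_PgL_zero hgc hu hsubW hP0
  have : nuL v = (nuL v - y) + y := by abel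
  rw [this]
  exact Submodule.add_mem _ (hY.1 hker) hy

/-- The eigenspace identifications. -/
lemma eigen_id (hΦ : IsExtendedSolution M Φ) (hnuI : IsNuInvariant M Φ) (hz : z ∈ M)
    (hY : (Wmodel Φ z).map (lamZ 1) ≤ Y z ∧ Y z ≤ Wmodel Φ z)
    (hcl : (Y z).map nuL ≤ Y z) :
    Zof Φ Y z ⊓ grassOf (evalm1 Φ z) =
        Submodule.span ℂ
          ((P0inv Φ z) ''
            ((Y z ⊓ LinearMap.ker (nuL - (LinearMap.id : Hsp n →ₗ[ℂ] Hsp n)) :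
              Submodule ℂ (Hsp n)) : Set (Hsp n))) ∧
      Zof Φ Y z ⊓ (grassOf (evalm1 Φ z))ᗮ =
        Submodule.span ℂ
          ((P0inv Φ z) ''
            ((Y z ⊓ LinearMap.ker (nuL + (LinearMap.id : Hsp n →ₗ[ℂ] Hsp n)) :
              Submodule ℂ (Hsp n)) : Set (Hsp n))) := by
  have hgc : Continuous (Φ z) := loop_continuous hΦ.1 hz
  have hu : ∀ x, Φ z x ∈ unitary (Evec n →L[ℂ] Evec n) := hΦ.1.1 z hz
  have hnuz : ∀ x, Φ z x * Φ z half = Φ z (x + half) := hnuI z hz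
  have hf2 : Φ z half * Φ z half = 1 := phi_invol hΦ hnuI hz
  set f := Φ z half with hf_def
  have horth : (grassOf f)ᗮ = LinearMap.ker ((f + 1 : Evec n →L[ℂ] Evec n) : Evec n →ₗ[ℂ] Evec n) := orth_grassOf (hu half) hf2
  have hZ : Zof Φ Y z = Submodule.map (PgL (Φ z) hgc) (Y z) := by
    unfold Zof; exact span_image_eq_map hgc (Y z)
  have hνY : ∀ v ∈ Y z, nuL v ∈ Y z := fun v hv => hcl (Submodule.mem_map_of_mem hv)
  constructor
  · rw [span_image_eq_map hgc]
    apply le_antisymm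
    · rintro ξ ⟨hξZ, hξG⟩
      rw [hZ] at hξZ
      obtain ⟨v, hv, rfl⟩ := hξZ
      have hfξ : f (PgL (Φ z) hgc v) = PgL (Φ z) hgc v := (mem_grassOf_iff _).1 hξG
      set v' := (2⁻¹ : ℂ) • (v + nuL v) with hv'_def
      have hv'Y : v' ∈ Y z :=
        Submodule.smul_mem _ _ (Submodule.add_mem _ hv (hνY v hv))
      have hv'k : v' ∈ LinearMap.ker (nuL - (LinearMap.id : Hsp n →ₗ[ℂ] Hsp n)) := by
        rw [LinearMap.mem_ker, LinearMap.sub_apply, LinearMap.id_apply, sub_eq_zero,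
          hv'_def, nuL.map_smul, nuL.map_add, nuL_nuL, add_comm]
      refine ⟨v', ⟨hv'Y, hv'k⟩, ?_⟩
      show PgL (Φ z) hgc ((2⁻¹ : ℂ) • (v + nuL v)) = PgL (Φ z) hgc v
      rw [(PgL (Φ z) hgc).map_smul, (PgL (Φ z) hgc).map_add, PgL_nuL hgc hu hnuz, hfξ,
        show PgL (Φ z) hgc v + PgL (Φ z) hgc v = (2 : ℂ) • PgL (Φ z) hgc v from
          (two_smul ℂ _).symm, smul_smul]
      norm_num
    · rintro _ ⟨v, ⟨hvY, hvk⟩, rfl⟩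
      have hvk' : v ∈ LinearMap.ker (nuL - (LinearMap.id : Hsp n →ₗ[ℂ] Hsp n)) := hvk
      have hνv : nuL v = v := by
        rw [LinearMap.mem_ker, LinearMap.sub_apply, LinearMap.id_apply, sub_eq_zero] at hvk'
        exact hvk'
      refine ⟨by rw [hZ]; exact Submodule.mem_map_of_mem hvY, ?_⟩
      show PgL (Φ z) hgc v ∈ grassOf f
      rw [mem_grassOf_iff, ← PgL_nuL hgc hu hnuz, hνv]
  · rw [span_image_eq_map hgc]
    apply le_antisymm
    · rintro ξ ⟨hξZ, hξG⟩
      rw [hZ] at hξZ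
      obtain ⟨v, hv, rfl⟩ := hξZ
      have hfξ : f (PgL (Φ z) hgc v) = -PgL (Φ z) hgc v :=
        (mem_kerP1_iff _).1 (horth ▸ hξG)
      set v' := (2⁻¹ : ℂ) • (v - nuL v) with hv'_def
      have hv'Y : v' ∈ Y z :=
        Submodule.smul_mem _ _ (Submodule.sub_mem _ hv (hνY v hv))
      have hv'k : v' ∈ LinearMap.ker (nuL + (LinearMap.id : Hsp n →ₗ[ℂ] Hsp n)) := by
        rw [LinearMap.mem_ker, LinearMap.add_apply, LinearMap.id_apply]
        have hns : nuL v' = (2⁻¹ : ℂ) • (nuL v - v) := by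
          rw [hv'_def, nuL.map_smul]
          congr 1
          rw [map_sub, nuL_nuL]
        rw [hns]
        module
      refine ⟨v', ⟨hv'Y, hv'k⟩, ?_⟩
      show PgL (Φ z) hgc ((2⁻¹ : ℂ) • (v - nuL v)) = PgL (Φ z) hgc v
      rw [(PgL (Φ z) hgc).map_smul, map_sub, PgL_nuL hgc hu hnuz, hfξ, sub_neg_eq_add,
        show PgL (Φ z) hgc v + PgL (Φ z) hgc v = (2 : ℂ) • PgL (Φ z) hgc v from
          (two_smul ℂ _).symm, smul_smul]
      norm_num
    · rintro _ ⟨v, ⟨hvY, hvk⟩, rfl⟩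
      have hvk' : v ∈ LinearMap.ker (nuL + (LinearMap.id : Hsp n →ₗ[ℂ] Hsp n)) := hvk
      have hνv : nuL v = -v := by
        rw [LinearMap.mem_ker, LinearMap.add_apply, LinearMap.id_apply] at hvk'
        exact eq_neg_of_add_eq_zero_left hvk'
      refine ⟨by rw [hZ]; exact Submodule.mem_map_of_mem hvY, ?_⟩
      show PgL (Φ z) hgc v ∈ (grassOf f)ᗮ
      rw [horth, mem_kerP1_iff, ← PgL_nuL hgc hu hnuz, hνv, map_neg]

end Main

end S8
/-- Lemma 4.9 / `le:splits`.  Let `Φ` be a `ν`-invariant extended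
solution, `W = Φ H_+`, `φ = Φ_{-1} : M → G_*(ℂⁿ)`, and let `Y` be a subbundle of `W`
containing `λ W`.  Then `Y` is closed under `ν` iff `Z = P_0(Φ⁻¹ Y)` splits for `φ`,
and in that case `Z ∩ φ = P_0(Φ⁻¹ Y_+)` and `Z ∩ φ^⊥ = P_0(Φ⁻¹ Y_-)`, where `Y_±` are
the intersections of `Y` with the `(±1)`-eigenspaces of `ν`. -/
theorem statement_8 {n : ℕ} (M : Set ℂ) (hMo : IsOpen M) (hMc : IsConnected M)
    (Φ : ℂ → Circ → (Evec n →L[ℂ] Evec n))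
    (hΦ : IsExtendedSolution M Φ) (hnu : IsNuInvariant M Φ)
    (Y : ℂ → Submodule ℂ (Hsp n))
    (hY : ∀ z ∈ M, (Wmodel Φ z).map (lamZ 1) ≤ Y z ∧ Y z ≤ Wmodel Φ z) :
    ((∀ z ∈ M, (Y z).map nuL ≤ Y z) ↔
      (∀ z ∈ M, Zof Φ Y z =
        (Zof Φ Y z ⊓ grassOf (evalm1 Φ z)) ⊔ (Zof Φ Y z ⊓ (grassOf (evalm1 Φ z))ᗮ)))
    ∧
    ((∀ z ∈ M, (Y z).map nuL ≤ Y z) → ∀ z ∈ M,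
      Zof Φ Y z ⊓ grassOf (evalm1 Φ z) =
        Submodule.span ℂ
          ((P0inv Φ z) ''
            ((Y z ⊓ LinearMap.ker (nuL - (LinearMap.id : Hsp n →ₗ[ℂ] Hsp n)) :
              Submodule ℂ (Hsp n)) : Set (Hsp n))) ∧
      Zof Φ Y z ⊓ (grassOf (evalm1 Φ z))ᗮ =
        Submodule.span ℂ
          ((P0inv Φ z) ''
            ((Y z ⊓ LinearMap.ker (nuL + (LinearMap.id : Hsp n →ₗ[ℂ] Hsp n)) :
              Submodule ℂ (Hsp n)) : Set (Hsp n)))) := by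
  constructor
  · constructor
    · intro hcl z hz
      exact S8.forward_split hΦ hnu hz (hY z hz) (hcl z hz)
    · intro hsp z hz
      exact S8.backward_closed hΦ hnu hz (hY z hz) (hsp z hz)
  · intro hcl z hz
    exact S8.eigen_id hΦ hnu hz (hY z hz) (hcl z hz)

end Twistor
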